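/- Any finite-order orientation-preserving homeomorphism of S¹ is conjugate in Homeo₊(S¹) to a rotation. -/

import Mathlib

open Finset Filter

/-- A homeomorphism of the circle `ℝ/ℤ` is orientation preserving if it lifts to a
monotone map `F : ℝ → ℝ` commuting with translation by `1`. -/
def OrientationPreserving (f : AddCircle (1 : ℝ) ≃ₜ AddCircle (1 : ℝ)) : Prop :=
  ∃ F : ℝ → ℝ, Monotone F ∧ (∀ x : ℝ, F (x + 1) = F x + 1) ∧
    ∀ x : ℝ, f (x : AddCircle (1 : ℝ)) = (F x : AddCircle (1 : ℝ))

private lemma lift_int' {F : ℝ → ℝ} (h1 : ∀ x, F (x + 1) = F x + 1) :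
    ∀ (j : ℤ) (x : ℝ), F (x + j) = F x + j := by
  have hsub : ∀ x, F (x - 1) = F x - 1 := by
    intro x
    have := h1 (x - 1)
    simp only [sub_add_cancel] at this
    linarith
  intro j
  induction j using Int.induction_on with
  | zero => simp
  | succ i ih =>
    intro x
    have h2 : x + ((i : ℤ) + 1 : ℤ) = (x + (i : ℤ)) + 1 := by push_cast; ring
    rw [h2, h1, ih]
    push_cast; ring
  | pred i ih =>
    intro x
    have h2 : x + (-(i : ℤ) - 1 : ℤ) = (x + (-(i:ℤ) : ℤ)) - 1 := by push_cast; ring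
    rw [h2, hsub, ih]
    push_cast; ring

private lemma circle_coe_eq_iff {a b : ℝ} :
    (a : AddCircle (1:ℝ)) = (b : AddCircle (1:ℝ)) ↔ ∃ j : ℤ, a = b + j := by
  rw [QuotientAddGroup.eq_iff_sub_mem]
  constructor
  · intro h
    obtain ⟨j, hj⟩ := AddSubgroup.mem_zmultiples_iff.mp h
    exact ⟨j, by simp only [zsmul_eq_mul, mul_one] at hj; linarith⟩
  · rintro ⟨j, rfl⟩
    exact AddSubgroup.mem_zmultiples_iff.mpr ⟨j, by simp [zsmul_eq_mul]⟩

private noncomputable def descend (P : ℝ → ℝ) (hP : ∀ (j : ℤ) (x : ℝ), P (x + j) = P x + j) :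
    AddCircle (1 : ℝ) → AddCircle (1 : ℝ) :=
  Quotient.map' P (by
    intro a b hab
    rw [QuotientAddGroup.leftRel_apply] at *
    obtain ⟨j, hj⟩ := AddSubgroup.mem_zmultiples_iff.mp hab
    refine AddSubgroup.mem_zmultiples_iff.mpr ⟨j, ?_⟩
    have hb : b = a + j := by
      simp only [zsmul_eq_mul, mul_one] at hj
      linarith
    rw [hb, hP j a]
    simp [zsmul_eq_mul])

private lemma descend_coe (P : ℝ → ℝ) (hP : ∀ (j : ℤ) (x : ℝ), P (x + j) = P x + j) (x : ℝ) :
    descend P hP (x : AddCircle (1:ℝ)) = (P x : AddCircle (1:ℝ)) := rfl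

private lemma descend_continuous (P : ℝ → ℝ) (hP : ∀ (j : ℤ) (x : ℝ), P (x + j) = P x + j)
    (hc : Continuous P) : Continuous (descend P hP) :=
  Continuous.quotient_map' hc _

theorem finite_order_conjugate_to_rotation
    (f : AddCircle (1 : ℝ) ≃ₜ AddCircle (1 : ℝ)) (hf : OrientationPreserving f)
    (n : ℕ) (hn : 1 ≤ n) (hord : ∀ x : AddCircle (1 : ℝ), (⇑f)^[n] x = x) :
    ∃ k : ℕ, ∃ h : AddCircle (1 : ℝ) ≃ₜ AddCircle (1 : ℝ),
      OrientationPreserving h ∧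
      ∀ x : AddCircle (1 : ℝ),
        h (f (h.symm x)) = x + (((k : ℝ) / (n : ℝ) : ℝ) : AddCircle (1 : ℝ)) := by
  classical
  obtain ⟨F, Fmono, F1, hFf⟩ := hf
  have npos : (0:ℝ) < n := by exact_mod_cast hn
  have Fint : ∀ (j : ℤ) (x : ℝ), F (x + j) = F x + j := lift_int' F1
  -- F is surjective, hence continuous
  have Fsurj : Function.Surjective F := by
    intro y
    obtain ⟨c, hc⟩ := f.surjective (y : AddCircle (1:ℝ))
    obtain ⟨x, rfl⟩ := QuotientAddGroup.mk_surjective c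
    rw [hFf] at hc
    obtain ⟨j, hj⟩ := circle_coe_eq_iff.mp hc
    refine ⟨x + (-j : ℤ), ?_⟩
    rw [Fint (-j) x]
    push_cast
    linarith
  have Fcont : Continuous F := Fmono.continuous_of_surjective Fsurj
  -- iterates of F
  have Fiter_mono : ∀ i : ℕ, Monotone (F^[i]) := fun i => Fmono.iterate i
  have Fiter_cont : ∀ i : ℕ, Continuous (F^[i]) := fun i => Fcont.iterate i
  have Fiter1 : ∀ (i : ℕ) (x : ℝ), F^[i] (x + 1) = F^[i] x + 1 := by
    intro i
    induction i with
    | zero => simp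
    | succ i ih =>
      intro x
      rw [Function.iterate_succ_apply', Function.iterate_succ_apply', ih, F1]
  have hfiter : ∀ (i : ℕ) (x : ℝ),
      (⇑f)^[i] (x : AddCircle (1:ℝ)) = ((F^[i] x : ℝ) : AddCircle (1:ℝ)) := by
    intro i
    induction i with
    | zero => simp
    | succ i ih =>
      intro x
      rw [Function.iterate_succ_apply', Function.iterate_succ_apply', ih, hFf]
  -- F^[n] x = x + m for a fixed integer m
  have hGx : ∀ x : ℝ, ∃ j : ℤ, F^[n] x = x + j := by
    intro x
    exact circle_coe_eq_iff.mp (by rw [← hfiter n x, hord])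
  set q : ℝ → ℤ := fun x => ⌊F^[n] x - x⌋ with hq
  have hqval : ∀ x : ℝ, (q x : ℝ) = F^[n] x - x := by
    intro x
    obtain ⟨j, hj⟩ := hGx x
    have hx : F^[n] x - x = (j : ℝ) := by linarith
    rw [hq]; simp [hx]
  have hqcont : Continuous q := by
    rw [Int.isClosedEmbedding_coe_real.isEmbedding.continuous_iff]
    have : ((↑) : ℤ → ℝ) ∘ q = fun x => F^[n] x - x := funext hqval
    rw [this]
    exact (Fiter_cont n).sub continuous_id
  have hqconst : ∀ x : ℝ, q x = q 0 :=
    fun x => ((IsLocallyConstant.iff_continuous q).mpr hqcont).apply_eq_of_preconnectedSpace x 0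
  set m : ℤ := q 0 with hm
  have hGm : ∀ x : ℝ, F^[n] x = x + m := by
    intro x
    have h1 := hqval x
    rw [hqconst x] at h1
    linarith
  -- The averaged conjugating lift H
  set H : ℝ → ℝ := fun x => (∑ i ∈ range n, F^[i] x) / n with hHdef
  have Hmono : Monotone H := by
    intro a b hab
    have hs : ∑ i ∈ range n, F^[i] a ≤ ∑ i ∈ range n, F^[i] b :=
      Finset.sum_le_sum fun i _ => Fiter_mono i hab
    exact (div_le_div_iff_of_pos_right npos).mpr hs
  have Hstrict : StrictMono H := by
    intro a b hab
    have hs : ∑ i ∈ range n, F^[i] a < ∑ i ∈ range n, F^[i] b := by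
      refine Finset.sum_lt_sum (fun i _ => Fiter_mono i hab.le) ?_
      exact ⟨0, Finset.mem_range.mpr (by omega), by simpa using hab⟩
    exact div_lt_div_of_pos_right hs npos
  have Hcont : Continuous H :=
    (continuous_finset_sum (range n) fun i _ => Fiter_cont i).div_const _
  have H1 : ∀ x, H (x + 1) = H x + 1 := by
    intro x
    have hs : ∑ i ∈ range n, F^[i] (x + 1) = (∑ i ∈ range n, F^[i] x) + n := by
      rw [Finset.sum_congr rfl fun i _ => Fiter1 i x, Finset.sum_add_distrib]
      simp
    show (∑ i ∈ range n, F^[i] (x + 1)) / n = (∑ i ∈ range n, F^[i] x) / n + 1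
    rw [hs]
    field_simp
  have HF : ∀ x, H (F x) = H x + (m : ℝ) / n := by
    intro x
    have key : ∑ i ∈ range n, F^[i] (F x) = (∑ i ∈ range n, F^[i] x) + m := by
      have e1 : ∀ i : ℕ, F^[i] (F x) = F^[i + 1] x :=
        fun i => (Function.iterate_succ_apply F i x).symm
      calc ∑ i ∈ range n, F^[i] (F x) = ∑ i ∈ range n, F^[i + 1] x :=
            Finset.sum_congr rfl fun i _ => e1 i
        _ = (∑ i ∈ range (n + 1), F^[i] x) - F^[0] x := by
            rw [Finset.sum_range_succ']; ring
        _ = (∑ i ∈ range n, F^[i] x) + F^[n] x - x := by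
            rw [Finset.sum_range_succ]; simp
        _ = (∑ i ∈ range n, F^[i] x) + m := by rw [hGm]; ring
    show (∑ i ∈ range n, F^[i] (F x)) / n = (∑ i ∈ range n, F^[i] x) / n + (m : ℝ) / n
    rw [key]
    field_simp
  have Hint : ∀ (j : ℤ) (x : ℝ), H (x + j) = H x + j := lift_int' H1
  have Hsurj : Function.Surjective H := by
    have htop : Tendsto H atTop atTop := by
      refine tendsto_atTop_atTop_of_monotone Hmono fun b => ?_
      refine ⟨(0 : ℝ) + (⌈b - H 0⌉ : ℤ), ?_⟩
      rw [Hint]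
      have := Int.le_ceil (b - H 0)
      linarith
    have hbot : Tendsto H atBot atBot := by
      refine tendsto_atBot_atBot_of_monotone Hmono fun b => ?_
      refine ⟨(0 : ℝ) + (⌊b - H 0⌋ : ℤ), ?_⟩
      rw [Hint]
      have := Int.floor_le (b - H 0)
      linarith
    exact Hcont.surjective htop hbot
  set E : ℝ ≃o ℝ := StrictMono.orderIsoOfSurjective H Hstrict Hsurj with hEdef
  have hEcoe : ∀ x : ℝ, E x = H x := fun x => rfl
  have Esymm1 : ∀ x, E.symm (x + 1) = E.symm x + 1 := by
    intro x
    apply E.injective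
    rw [E.apply_symm_apply]
    have h1 : E (E.symm x + 1) = H (E.symm x + 1) := rfl
    rw [h1, H1, ← hEcoe, E.apply_symm_apply]
  have Sint : ∀ (j : ℤ) (x : ℝ), E.symm (x + j) = E.symm x + j := lift_int' Esymm1
  let hc : AddCircle (1:ℝ) ≃ₜ AddCircle (1:ℝ) :=
    { toFun := descend H Hint
      invFun := descend (⇑E.symm) Sint
      left_inv := by
        intro x
        induction x using QuotientAddGroup.induction_on with
        | H y =>
          show descend (⇑E.symm) Sint (descend H Hint (y : AddCircle (1:ℝ))) = _
          rw [descend_coe, descend_coe]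
          congr 1
          exact E.symm_apply_apply y
      right_inv := by
        intro x
        induction x using QuotientAddGroup.induction_on with
        | H y =>
          show descend H Hint (descend (⇑E.symm) Sint (y : AddCircle (1:ℝ))) = _
          rw [descend_coe, descend_coe]
          congr 1
          exact E.apply_symm_apply y
      continuous_toFun := descend_continuous H Hint Hcont
      continuous_invFun := descend_continuous (⇑E.symm) Sint E.symm.continuous }
  -- the rotation amount
  have hnz : (n : ℤ) ≠ 0 := by exact_mod_cast (by omega : n ≠ 0)
  refine ⟨(m % (n : ℤ)).toNat, hc, ⟨H, Hmono, H1, fun x => rfl⟩, ?_⟩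
  have hk0 : 0 ≤ m % (n : ℤ) := Int.emod_nonneg m hnz
  have hkZ : ((m % (n : ℤ)).toNat : ℤ) = m % (n : ℤ) := Int.toNat_of_nonneg hk0
  have rot_eq : (((m : ℝ) / n : ℝ) : AddCircle (1:ℝ)) =
      ((((m % (n : ℤ)).toNat : ℝ) / n : ℝ) : AddCircle (1:ℝ)) := by
    rw [circle_coe_eq_iff]
    refine ⟨m / n, ?_⟩
    have h2 : (m : ℤ) = ((m % (n : ℤ)).toNat : ℤ) + n * (m / n) := by
      rw [hkZ]
      have h5 := Int.emod_add_mul_ediv m (n : ℤ)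
      omega
    have h3 : (m : ℝ) = ((m % (n : ℤ)).toNat : ℝ) + (n : ℝ) * ((m / n : ℤ) : ℝ) := by
      exact_mod_cast h2
    field_simp
    linarith
  intro x
  induction x using QuotientAddGroup.induction_on with
  | H y =>
    show descend H Hint (f (descend (⇑E.symm) Sint (y : AddCircle (1:ℝ)))) = _
    rw [descend_coe, hFf, descend_coe]
    have h1 : H (F (E.symm y)) = y + (m : ℝ) / n := by
      rw [HF]
      have h2 : H (E.symm y) = y := E.apply_symm_apply y
      rw [h2]
    rw [h1]
    have h4 : ((y + (m : ℝ) / n : ℝ) : AddCircle (1:ℝ)) =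
        (y : AddCircle (1:ℝ)) + (((m : ℝ) / n : ℝ) : AddCircle (1:ℝ)) :=
      AddCircle.coe_add _ _ _
    rw [h4, rot_eq]
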